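/- For any operators S and T on a finite-dimensional Hilbert space with 0 ≤ S ≤ I and T ≥ 0, and any real c > 0, the operator inequality I − (S+T)^{−1/2} S (S+T)^{−1/2} ≤ (1+c)(I−S) + (2+c+c^{−1}) T holds (where the inverse square root is taken on the support of S+T). -/

import Mathlib

open Matrix Kronecker BigOperators ComplexOrder

/-- The positive semidefinite square root of a positive semidefinite matrix
(definition of the older Mathlib, since removed). -/
noncomputable def Matrix.PosSemidef.sqrt {n 𝕜 : Type*} [Fintype n] [DecidableEq n] [RCLike 𝕜]
    {A : Matrix n n 𝕜} (hA : A.PosSemidef) : Matrix n n 𝕜 :=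
  hA.1.eigenvectorUnitary.1 * diagonal ((↑) ∘ (fun x => Real.sqrt x) ∘ hA.1.eigenvalues) *
    (star hA.1.eigenvectorUnitary : Matrix n n 𝕜)

noncomputable def traceNorm {n : Type*} [Fintype n] [DecidableEq n] (A : Matrix n n ℂ) : ℝ :=
  ((Matrix.posSemidef_conjTranspose_mul_self A).sqrt).trace.re

noncomputable def vNEntropy {n : Type*} [Fintype n] [DecidableEq n] (M : Matrix n n ℂ) : ℝ :=
  if h : M.IsHermitian then -∑ i, (h.eigenvalues i) * Real.logb 2 (h.eigenvalues i) else 0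

open scoped Classical in
noncomputable def fidelity {n : Type*} [Fintype n] [DecidableEq n] (A B : Matrix n n ℂ) : ℝ :=
  if h : A.PosSemidef ∧ B.PosSemidef then (traceNorm (h.1.sqrt * h.2.sqrt))^2 else 0

noncomputable def Dmin {n : Type*} [Fintype n] [DecidableEq n] (A B : Matrix n n ℂ) : ℝ :=
  - Real.logb 2 (fidelity A B)

noncomputable def Dmax {n : Type*} [Fintype n] [DecidableEq n] (A B : Matrix n n ℂ) : EReal :=
  ⨅ l ∈ {l : ℝ | ((((2:ℝ)^l : ℝ) : ℂ) • B - A).PosSemidef}, (l : EReal)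

noncomputable def traceSnd {x y : Type*} [Fintype y] (M : Matrix (x × y) (x × y) ℂ) :
    Matrix x x ℂ := Matrix.of fun i j => ∑ k, M (i,k) (j,k)

noncomputable def traceFst {x y : Type*} [Fintype x] (M : Matrix (x × y) (x × y) ℂ) :
    Matrix y y ℂ := Matrix.of fun i j => ∑ k, M (k,i) (k,j)

noncomputable def mutInfo {x y : Type*} [Fintype x] [Fintype y] [DecidableEq x] [DecidableEq y]
    (M : Matrix (x × y) (x × y) ℂ) : ℝ :=
  vNEntropy (traceSnd M) + vNEntropy (traceFst M) - vNEntropy M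

def blockApply {r a b : Type*} (Φ : Matrix a a ℂ →ₗ[ℂ] Matrix b b ℂ)
    (M : Matrix (r × a) (r × a) ℂ) : Matrix (r × b) (r × b) ℂ :=
  Matrix.of fun x y => Φ (Matrix.of fun s t => M (x.1, s) (y.1, t)) x.2 y.2

structure QChannel (a b : Type*) [Fintype a] [DecidableEq a] [Fintype b] [DecidableEq b] where
  map : Matrix a a ℂ →ₗ[ℂ] Matrix b b ℂ
  trace_preserving : ∀ M : Matrix a a ℂ, (map M).trace = M.trace
  completely_pos : ∀ (n : ℕ) (M : Matrix (Fin n × a) (Fin n × a) ℂ),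
    M.PosSemidef → (blockApply map M).PosSemidef

noncomputable def IRB {r b e : Type*} [Fintype r] [Fintype b] [Fintype e]
    [DecidableEq r] [DecidableEq b] [DecidableEq e]
    (ω : Matrix (r × (b × e)) (r × (b × e)) ℂ) : ℝ :=
  mutInfo (Matrix.of fun (p q : r × b) => ∑ y : e, ω (p.1, (p.2, y)) (q.1, (q.2, y)))

noncomputable def IRE {r b e : Type*} [Fintype r] [Fintype b] [Fintype e]
    [DecidableEq r] [DecidableEq b] [DecidableEq e]
    (ω : Matrix (r × (b × e)) (r × (b × e)) ℂ) : ℝ :=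
  mutInfo (Matrix.of fun (p q : r × e) => ∑ x : b, ω (p.1, (x, p.2)) (q.1, (x, q.2)))


noncomputable def pinvSqrt {n : Type*} [Fintype n] [DecidableEq n] {A : Matrix n n ℂ}
    (hA : A.IsHermitian) : Matrix n n ℂ :=
  (hA.eigenvectorUnitary : Matrix n n ℂ)
    * Matrix.diagonal (fun i => (((Real.sqrt (hA.eigenvalues i))⁻¹ : ℝ) : ℂ))
    * (star (hA.eigenvectorUnitary : Matrix n n ℂ))

/-!
With `M = S + T`, `P = M^{-1/2}` and `E` the support projection of `M`, the difference of the two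
sides is the sum of squares
`c (1 - E) + c⁻¹ Z T Z + (1 + c) (P - E) S (P - E) + 2 (1 + c) (√M - S)`
with `Z = c P - (1 + c) E`, an identity that holds in any algebra once `S` and `T` are supported
on `E`. Every term is positive; for the last one, `0 ≤ S ≤ 1` gives `S² ≤ S ≤ M`, and the square
root is operator monotone.
-/

section CStarAlgebra

variable {A : Type*} [CStarAlgebra A] [PartialOrder A] [StarOrderedRing A]

lemma mul_self_le_self {a : A} (ha₀ : 0 ≤ a) (ha₁ : a ≤ 1) : a * a ≤ a := by
  set s := CFC.sqrt a
  have hs : s * s = a := CFC.sqrt_mul_sqrt_self a ha₀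
  calc a * a = s * s * (s * s) := by rw [hs]
    _ = s * (s * s) * s := by simp only [mul_assoc]
    _ ≤ s * 1 * s := by rw [hs]; exact conjugate_le_conjugate_of_nonneg ha₁ (CFC.sqrt_nonneg a)
    _ = a := by rw [mul_one, hs]

lemma le_sqrt_of_le_one_of_le {a b : A} (ha₀ : 0 ≤ a) (ha₁ : a ≤ 1) (hab : a ≤ b) :
    a ≤ CFC.sqrt b :=
  calc a = CFC.sqrt (a * a) := (CFC.sqrt_mul_self a ha₀).symm
    _ ≤ CFC.sqrt b := CFC.sqrt_le_sqrt _ _ ((mul_self_le_self ha₀ ha₁).trans hab)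

lemma IsSelfAdjoint.mul_right_and_mul_left_of_nonneg_of_le {a b e : A} (he : IsSelfAdjoint e)
    (ha : 0 ≤ a) (hab : a ≤ b) (hbe : b * e = b) : a * e = a ∧ e * a = a := by
  suffices a * e = a from
    ⟨this, by simpa [ha.star_eq, he.star_eq] using congr(star $this)⟩
  have hq : star (1 - e) * a * (1 - e) = 0 := by
    refine le_antisymm ?_ (star_left_conjugate_nonneg ha _)
    grw [star_left_conjugate_le_conjugate hab (1 - e), mul_assoc, mul_sub, mul_one, hbe, sub_self,
      mul_zero]
  have hsq : CFC.sqrt a * (1 - e) = 0 := by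
    rw [← CStarRing.star_mul_self_eq_zero_iff, star_mul, (CFC.sqrt_nonneg a).star_eq, mul_assoc,
      ← mul_assoc (CFC.sqrt a), CFC.sqrt_mul_sqrt_self a ha, ← mul_assoc, hq]
  simpa [← mul_assoc, CFC.sqrt_mul_sqrt_self a ha, mul_sub, sub_eq_zero, eq_comm (a := a)]
    using congr(CFC.sqrt a * $hsq)

lemma sqrt_eq_cfc_real_sqrt {a : A} (ha : 0 ≤ a) : CFC.sqrt a = cfc Real.sqrt a := by
  rw [CFC.sqrt_eq_real_sqrt a ha, cfcₙ_eq_cfc]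

end CStarAlgebra

lemma hayashi_nagaoka_identity {𝕜 A : Type*} [Field 𝕜] [Ring A] [Algebra 𝕜 A]
    {S T P E R : A} {c : 𝕜} (hc : c ≠ 0)
    (hES : E * S = S) (hSE : S * E = S) (hET : E * T = T) (hTE : T * E = T)
    (hPM : P * (S + T) = R) (hMP : (S + T) * P = R) (hPMP : P * (S + T) * P = E) :
    (1 + c) • (1 - S) + (2 + c + c⁻¹) • T - (1 - P * S * P) =
      c • (1 - E) + c⁻¹ • ((c • P - (1 + c) • E) * T * (c • P - (1 + c) • E))
        + (1 + c) • ((P - E) * S * (P - E)) + (2 * (1 + c)) • (R - S) := by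
  have hPT : P * T = R - P * S := eq_sub_of_add_eq' (by rw [← mul_add, hPM])
  have hTP : T * P = R - S * P := eq_sub_of_add_eq' (by rw [← add_mul, hMP])
  have hPTP : P * T * P = E - P * S * P := eq_sub_of_add_eq' (by rw [← hPMP, mul_add, add_mul])
  have hPSE : P * S * E = P * S := by rw [mul_assoc, hSE]
  have hPTE : P * T * E = P * T := by rw [mul_assoc, hTE]
  simp only [smul_sub, sub_mul, mul_sub, add_mul, mul_add, smul_mul_assoc,
    mul_smul_comm, smul_smul, mul_one, one_mul]
  simp only [hES, hSE, hET, hTE, hPSE, hPTE, hPTP]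
  simp only [hPT, hTP]
  match_scalars <;> field_simp <;> ring

theorem CStarAlgebra.hayashi_nagaoka {A : Type*} [CStarAlgebra A] [PartialOrder A]
    [StarOrderedRing A] {S T P E : A} (hS : 0 ≤ S) (hS1 : S ≤ 1) (hT : 0 ≤ T)
    (hP : IsSelfAdjoint P) (hE : IsSelfAdjoint E) (hE1 : E ≤ 1) (hME : (S + T) * E = S + T)
    (hPM : P * (S + T) = CFC.sqrt (S + T)) (hMP : (S + T) * P = CFC.sqrt (S + T))
    (hPMP : P * (S + T) * P = E) {c : ℝ} (hc : 0 < c) :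
    1 - P * S * P ≤ (1 + c) • (1 - S) + (2 + c + c⁻¹) • T := by
  obtain ⟨hSE, hES⟩ :=
    hE.mul_right_and_mul_left_of_nonneg_of_le hS (le_add_of_nonneg_right hT) hME
  obtain ⟨hTE, hET⟩ :=
    hE.mul_right_and_mul_left_of_nonneg_of_le hT (le_add_of_nonneg_left hS) hME
  have hSR : S ≤ CFC.sqrt (S + T) := le_sqrt_of_le_one_of_le hS hS1 (le_add_of_nonneg_right hT)
  rw [← sub_nonneg, hayashi_nagaoka_identity hc.ne' hES hSE hET hTE hPM hMP hPMP]
  have hZ : IsSelfAdjoint (c • P - (1 + c) • E) :=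
    ((IsSelfAdjoint.all c).smul hP).sub ((IsSelfAdjoint.all _).smul hE)
  refine add_nonneg (add_nonneg (add_nonneg ?_ ?_) ?_) ?_ <;> refine smul_nonneg (by positivity) ?_
  · exact sub_nonneg.2 hE1
  · exact hZ.conjugate_nonneg hT
  · exact (hP.sub hE).conjugate_nonneg hS
  · exact sub_nonneg.2 hSR

lemma pinvSqrt_eq_cfc {n : Type*} [Fintype n] [DecidableEq n] {A : Matrix n n ℂ}
    (hA : A.IsHermitian) : pinvSqrt hA = cfc (fun x => (√x)⁻¹) A := by
  rw [hA.cfc_eq, IsHermitian.cfc, Unitary.conjStarAlgAut_apply]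
  rfl

namespace Matrix

open scoped MatrixOrder Matrix.Norms.L2Operator

variable {n 𝕜 : Type*} [Fintype n] [DecidableEq n] [RCLike 𝕜]

lemma cfc_mul_cfc_of_nonneg {A : Matrix n n 𝕜} (hA : 0 ≤ A) {f g h : ℝ → ℝ}
    (hfg : ∀ x, 0 ≤ x → f x * g x = h x) : cfc f A * cfc g A = cfc h A := by
  rw [← cfc_mul f g A (A.finite_real_spectrum.continuousOn f)
    (A.finite_real_spectrum.continuousOn g)]
  exact cfc_congr fun x hx => hfg x (spectrum_nonneg_of_nonneg hA hx)

lemma cfc_inv_sqrt_mul_self {A : Matrix n n ℂ} (hA : 0 ≤ A) :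
    cfc (fun x => (√x)⁻¹) A * A = CFC.sqrt A := by
  nth_rewrite 2 [← cfc_id' ℝ A]
  rw [sqrt_eq_cfc_real_sqrt hA]
  exact cfc_mul_cfc_of_nonneg hA fun x _ => by rw [inv_mul_eq_div, Real.div_sqrt]

lemma self_mul_cfc_inv_sqrt {A : Matrix n n ℂ} (hA : 0 ≤ A) :
    A * cfc (fun x => (√x)⁻¹) A = CFC.sqrt A := by
  nth_rewrite 1 [← cfc_id' ℝ A]
  rw [sqrt_eq_cfc_real_sqrt hA]
  exact cfc_mul_cfc_of_nonneg hA fun x _ => by rw [← div_eq_mul_inv, Real.div_sqrt]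

lemma cfc_inv_sqrt_mul_self_mul_cfc_inv_sqrt {A : Matrix n n ℂ} (hA : 0 ≤ A) :
    cfc (fun x => (√x)⁻¹) A * A * cfc (fun x => (√x)⁻¹) A =
      cfc (fun x : ℝ => if x = 0 then 0 else 1) A := by
  rw [cfc_inv_sqrt_mul_self hA, sqrt_eq_cfc_real_sqrt hA]
  refine cfc_mul_cfc_of_nonneg hA fun x hx => ?_
  split_ifs with h
  · simp [h]
  · exact mul_inv_cancel₀ (Real.sqrt_ne_zero'.2 (hx.lt_of_ne' h))

lemma self_mul_cfc_support {A : Matrix n n 𝕜} (hA : 0 ≤ A) :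
    A * cfc (fun x : ℝ => if x = 0 then 0 else 1) A = A := by
  nth_rewrite 1 [← cfc_id' ℝ A hA.isSelfAdjoint]
  refine (cfc_mul_cfc_of_nonneg hA fun x _ => ?_).trans (cfc_id' ℝ A hA.isSelfAdjoint)
  split_ifs with h <;> simp [h]

end Matrix

/-- Hayashi–Nagaoka operator inequality. -/
theorem hayashi_nagaoka {n : Type*} [Fintype n] [DecidableEq n]
    (S T : Matrix n n ℂ) (hS : S.PosSemidef) (hS1 : ((1 : Matrix n n ℂ) - S).PosSemidef)
    (hT : T.PosSemidef) (c : ℝ) (hc : 0 < c) :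
    (((1 + c : ℝ) : ℂ) • ((1 : Matrix n n ℂ) - S) + ((2 + c + c⁻¹ : ℝ) : ℂ) • T
      - ((1 : Matrix n n ℂ)
          - pinvSqrt (hS.1.add hT.1) * S * pinvSqrt (hS.1.add hT.1))).PosSemidef := by
  have hM := (hS.add hT).nonneg
  rw [pinvSqrt_eq_cfc, Complex.coe_smul, Complex.coe_smul]
  open scoped MatrixOrder Matrix.Norms.L2Operator in
  exact CStarAlgebra.hayashi_nagaoka hS.nonneg hS1 hT.nonneg (cfc_predicate _ _)
    (cfc_predicate _ _) (cfc_le_one _ _ fun x _ => by split_ifs <;> norm_num)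
    (self_mul_cfc_support hM) (cfc_inv_sqrt_mul_self hM) (self_mul_cfc_inv_sqrt hM)
    (cfc_inv_sqrt_mul_self_mul_cfc_inv_sqrt hM) hc
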